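/- Let C be a uniform clutter with incidence matrix A and edge incidence vectors v_1,...,v_q. Then C has the max-flow min-cut property if and only if Q(A) is an integral polyhedron and ℕ{v_1,...,v_q} = ℝ₊{v_1,...,v_q} ∩ ℤ^n. -/

import Mathlib

open Finset

/-- A clutter on vertex set `Fin n`: a family of nonempty edges, none contained in another. -/
structure Clutter (n : ℕ) where
  edges : Finset (Finset (Fin n))
  nonempty_edges : ∀ e ∈ edges, e.Nonempty
  antichain : ∀ e ∈ edges, ∀ f ∈ edges, e ⊆ f → e = f

namespace Clutter

variable {n : ℕ}

/-- `C` is `d`-uniform: every edge has exactly `d` vertices. -/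
def Uniform (C : Clutter n) (d : ℕ) : Prop := ∀ e ∈ C.edges, e.card = d

/-- `S` is a vertex cover of `C`. -/
def IsCover (C : Clutter n) (S : Finset (Fin n)) : Prop := ∀ e ∈ C.edges, (e ∩ S).Nonempty

/-- `S` is a minimal vertex cover of `C`. -/
def IsMinCover (C : Clutter n) (S : Finset (Fin n)) : Prop :=
  C.IsCover S ∧ ∀ T ⊆ S, C.IsCover T → T = S

/-- The vertex covering number `α₀(C)`. -/
noncomputable def coverNumber (C : Clutter n) : ℕ :=
  sInf {k | ∃ S : Finset (Fin n), C.IsCover S ∧ S.card = k}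

/-- The edge independence (matching) number `β₁(C)`. -/
noncomputable def matchNumber (C : Clutter n) : ℕ :=
  sSup {k | ∃ M : Finset (Finset (Fin n)), M ⊆ C.edges ∧
    (∀ e ∈ M, ∀ f ∈ M, e ≠ f → Disjoint e f) ∧ M.card = k}

/-- `C` has a perfect matching: pairwise disjoint edges covering all vertices. -/
def HasPerfectMatching (C : Clutter n) : Prop :=
  ∃ M : Finset (Finset (Fin n)), M ⊆ C.edges ∧
    (∀ e ∈ M, ∀ f ∈ M, e ≠ f → Disjoint e f) ∧ (∀ i : Fin n, ∃ e ∈ M, i ∈ e)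

/-- The set covering polyhedron `Q(A) = {x : x ≥ 0, xA ≥ 1}`. -/
def QA (C : Clutter n) : Set (Fin n → ℝ) :=
  {x | (∀ i, 0 ≤ x i) ∧ ∀ e ∈ C.edges, 1 ≤ ∑ i ∈ e, x i}

/-- `Q(A)` is an integral polyhedron: all its vertices (extreme points) are integral. -/
def QAIntegral (C : Clutter n) : Prop :=
  ∀ x ∈ Set.extremePoints ℝ C.QA, ∀ i, ∃ z : ℤ, x i = (z : ℝ)

/-- Deletion of a vertex: remove `v` and all edges through it. -/
def delete (C : Clutter n) (v : Fin n) : Clutter n where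
  edges := C.edges.filter (fun e => v ∉ e)
  nonempty_edges := fun e he => C.nonempty_edges e (mem_filter.mp he).1
  antichain := fun e he f hf hef =>
    C.antichain e (mem_filter.mp he).1 f (mem_filter.mp hf).1 hef

/-- The edges of the minor of `C` obtained by deleting the vertices in `D`
(setting them to `0`) and contracting the vertices in `U` (setting them to `1`):
the minimal nonempty sets of the form `e \ U` with `e` an edge disjoint from `D`. -/
def minorEdges (C : Clutter n) (D U : Finset (Fin n)) : Finset (Finset (Fin n)) :=
  ((C.edges.filter (fun e => Disjoint e D)).image (fun e => e \ U)).filter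
    (fun e => e.Nonempty ∧
      ∀ f ∈ (C.edges.filter (fun e => Disjoint e D)).image (fun e => e \ U),
        f.Nonempty → f ⊆ e → f = e)

/-- The minor of `C` determined by deleting `D` and contracting `U`. -/
def minor (C : Clutter n) (D U : Finset (Fin n)) : Clutter n where
  edges := C.minorEdges D U
  nonempty_edges := fun e he => ((mem_filter.mp he).2).1
  antichain := fun e he f hf hef =>
    ((mem_filter.mp hf).2).2 e (mem_filter.mp he).1 ((mem_filter.mp he).2).1 hef

/-- The König property: `α₀(C) = β₁(C)`. -/
def HasKonig (C : Clutter n) : Prop := C.coverNumber = C.matchNumber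

/-- The packing property: every (proper) minor of `C` has the König property. -/
def PackingProperty (C : Clutter n) : Prop :=
  ∀ D U : Finset (Fin n), Disjoint D U →
    (∀ e ∈ C.edges, Disjoint e D → ¬ e ⊆ U) → (C.minor D U).HasKonig

/-- The max-flow min-cut property: for every nonnegative integral `α` the LP
`min{⟨α,x⟩ : x ≥ 0, xA ≥ 1}` and its dual `max{⟨y,1⟩ : y ≥ 0, Ay ≤ α}` both have
integral optimum solutions (expressed via a pair of integral feasible solutions
with equal objective values, which are then optimal by LP duality). -/
def HasMFMC (C : Clutter n) : Prop :=
  ∀ α : Fin n → ℕ,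
    ∃ (x : Fin n → ℕ) (y : Finset (Fin n) → ℕ),
      (∀ e ∈ C.edges, 1 ≤ ∑ i ∈ e, x i) ∧
      (∀ e, e ∉ C.edges → y e = 0) ∧
      (∀ i : Fin n, ∑ e ∈ C.edges.filter (fun e => i ∈ e), y e ≤ α i) ∧
      (∑ i, α i * x i = ∑ e ∈ C.edges, y e)

/-- The incidence matrix of `C`, with columns indexed by the edges. -/
def inc (C : Clutter n) : Matrix (Fin n) {e // e ∈ C.edges} ℤ :=
  Matrix.of fun i e => if i ∈ e.1 then 1 else 0

end Clutter

/-- `Δ_r(A) = 1`: the gcd of all nonzero `r × r` subdeterminants of `A` is `1`,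
i.e. every common divisor of them is a unit. -/
def DeltaOne {m m' : Type*} [Fintype m] [Fintype m'] (A : Matrix m m' ℤ) (r : ℕ) : Prop :=
  ∀ k : ℤ, (∀ (f : Fin r → m) (g : Fin r → m'), Function.Injective f → Function.Injective g →
    (A.submatrix f g).det ≠ 0 → k ∣ (A.submatrix f g).det) → IsUnit k


/-!
If `C` has the max-flow min-cut property, then every vertex `x` of `Q(A)` is the unique
minimizer, over `Q(A)`, of the weight counting the zero coordinates and the tight edges of `x`;
the integral minimizer supplied by max-flow min-cut is therefore `x` itself. If `a = Aλ` is
integral with `λ ≥ 0`, the integral packing `y` for the weight `a` has value at least `⟨λ, 1⟩`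
by weak duality, and uniformity gives `⟨Ay, 1⟩ = d ⟨y, 1⟩ ≥ d ⟨λ, 1⟩ = ⟨a, 1⟩`; together with
`Ay ≤ a` this forces `Ay = a`.

Conversely, integrality of `Q(A)` makes the covering LP optimum equal to the minimum weight `ν`
of a vertex cover, and Farkas' lemma yields a fractional packing `λ` of value `ν`. After lowering
`α` without changing `ν` until every vertex of positive weight lies in a minimum cover, the packing
is forced to satisfy `Aλ = α`, so `α` lies in the cone of the edges; the Hilbert basis property
makes it an integral combination `Ac`, and uniformity gives `⟨c, 1⟩ = ⟨λ, 1⟩ = ν`.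
-/

open Filter Topology

section PointedCone

variable {ι E : Type*} [Fintype ι] [NormedAddCommGroup E] [NormedSpace ℝ E]

theorem exists_pos_mul_sum_le_norm_sum_smul (g : ι → E)
    (hg : ∀ c : ι → ℝ, 0 ≤ c → ∑ k, c k • g k = 0 → c = 0) :
    ∃ δ > 0, ∀ c : ι → ℝ, 0 ≤ c → δ * ∑ k, c k ≤ ‖∑ k, c k • g k‖ := by
  classical
  rcases isEmpty_or_nonempty ι with hι | ⟨⟨k₀⟩⟩
  · exact ⟨1, one_pos, fun c _ => by simp⟩
  have hL : Continuous fun c : ι → ℝ => ‖∑ k, c k • g k‖ := by fun_prop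
  obtain ⟨c₀, hc₀, hmin⟩ := (isCompact_stdSimplex ℝ ι).exists_isMinOn
    ⟨_, single_mem_stdSimplex ℝ k₀⟩ hL.continuousOn
  have hδ : 0 < ‖∑ k, c₀ k • g k‖ := by
    refine norm_pos_iff.2 fun h => ?_
    have := hc₀.2
    simp [hg c₀ hc₀.1 h] at this
  refine ⟨_, hδ, fun c hc => ?_⟩
  rcases (sum_nonneg fun k _ => hc k).eq_or_lt with hs | hs
  · rw [← hs, mul_zero]
    positivity
  have hmem : (∑ k, c k)⁻¹ • c ∈ stdSimplex ℝ ι :=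
    ⟨fun k => smul_nonneg (inv_nonneg.2 hs.le) (hc k), by
      simp [← mul_sum, inv_mul_cancel₀ hs.ne']⟩
  have h : ‖∑ k, c₀ k • g k‖ ≤ ‖∑ k, ((∑ k, c k)⁻¹ • c) k • g k‖ := hmin hmem
  simp only [Pi.smul_apply, smul_eq_mul, mul_smul, ← smul_sum, norm_smul, Real.norm_eq_abs,
    abs_inv, abs_of_pos hs] at h
  rwa [le_inv_mul_iff₀ hs, mul_comm] at h

theorem isClosed_image_Ici_linearCombination (g : ι → E)
    (hg : ∀ c : ι → ℝ, 0 ≤ c → ∑ k, c k • g k = 0 → c = 0) :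
    IsClosed (Fintype.linearCombination ℝ g '' Set.Ici 0) := by
  set L := Fintype.linearCombination ℝ g
  have hL : Continuous L := L.continuous_of_finiteDimensional
  obtain ⟨δ, hδ, hbound⟩ := exists_pos_mul_sum_le_norm_sum_smul g hg
  refine isClosed_of_closure_subset fun y hy => ?_
  obtain ⟨u, hu, hlim⟩ := mem_closure_iff_seq_limit.1 hy
  choose c hc hcu using hu
  obtain ⟨M, hM⟩ := isBounded_iff_forall_norm_le.1 (Metric.isBounded_range_of_tendsto u hlim)
  have hcs : ∀ k, c k ∈ Set.Ici 0 ∩ Metric.closedBall 0 (M / δ) := by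
    intro k
    refine ⟨hc k, mem_closedBall_zero_iff.2 ?_⟩
    have hsum : ‖c k‖ ≤ ∑ j, c k j :=
      (pi_norm_le_iff_of_nonneg (sum_nonneg fun j _ => hc k j)).2 fun j => by
        rw [Real.norm_of_nonneg (hc k j)]
        exact single_le_sum (fun j _ => hc k j) (mem_univ j)
    have hLc := hbound (c k) (hc k)
    rw [← Fintype.linearCombination_apply, hcu k] at hLc
    rw [le_div_iff₀ hδ]
    nlinarith [hM _ (Set.mem_range_self k)]
  obtain ⟨c', hc', φ, hφ, hlim'⟩ :=
    tendsto_subseq_of_bounded (Metric.isBounded_closedBall.subset Set.inter_subset_right) hcs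
  have hc'0 : c' ∈ Set.Ici 0 :=
    ((isClosed_Ici.inter Metric.isClosed_closedBall).closure_subset hc').1
  refine ⟨c', hc'0, tendsto_nhds_unique ((hL.tendsto c').comp hlim') ?_⟩
  simpa only [Function.comp_def, hcu] using hlim.comp hφ.tendsto_atTop

theorem exists_nonneg_sum_smul_eq_of_forall_dual (g : ι → E)
    (hg : ∀ c : ι → ℝ, 0 ≤ c → ∑ k, c k • g k = 0 → c = 0) {p : E}
    (hp : ∀ φ : StrongDual ℝ E, (∀ k, 0 ≤ φ (g k)) → 0 ≤ φ p) :
    ∃ c : ι → ℝ, 0 ≤ c ∧ ∑ k, c k • g k = p := by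
  classical
  set K := Fintype.linearCombination ℝ g '' Set.Ici 0
  suffices p ∈ K by
    obtain ⟨c, hc, rfl⟩ := this
    exact ⟨c, hc, (Fintype.linearCombination_apply ℝ g c).symm⟩
  by_contra hpK
  obtain ⟨f, u, hfK, hfp⟩ := geometric_hahn_banach_closed_point
    ((convex_Ici 0).linear_image _) (isClosed_image_Ici_linearCombination g hg) hpK
  have hu : 0 < u := by simpa using hfK 0 ⟨0, Set.self_mem_Ici, map_zero _⟩
  have hfg : ∀ k, f (g k) ≤ 0 := by
    intro k
    by_contra! hk
    have hmem : Fintype.linearCombination ℝ g ((u / f (g k)) • Pi.single k 1) ∈ K :=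
      Set.mem_image_of_mem _ <| Set.mem_Ici.2 <|
        smul_nonneg (div_nonneg hu.le hk.le) (Pi.single_nonneg.2 zero_le_one)
    have := hfK _ hmem
    simp [Fintype.linearCombination_apply, Pi.single_apply, div_mul_cancel₀ _ hk.ne'] at this
  have := hp (-f) fun k => by simpa using hfg k
  simp only [neg_apply, Left.nonneg_neg_iff] at this
  linarith

end PointedCone

theorem eq_zero_of_mem_extremePoints_of_eventually {E : Type*} [AddCommGroup E] [Module ℝ E]
    {A : Set E} {x v : E} (hx : x ∈ A.extremePoints ℝ)
    (hv : ∀ᶠ t in 𝓝 (0 : ℝ), x + t • v ∈ A) : v = 0 := by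
  have hv' : ∀ᶠ t in 𝓝 (0 : ℝ), x + t • v ∈ A ∧ x + (-t) • v ∈ A :=
    hv.and ((continuous_neg.tendsto' 0 0 neg_zero).eventually hv)
  obtain ⟨t, ⟨hplus, hminus⟩, ht⟩ :=
    ((hv'.filter_mono nhdsWithin_le_nhds).and (self_mem_nhdsWithin (s := Set.Ioi 0))).exists
  have hseg : x ∈ openSegment ℝ (x + (-t) • v) (x + t • v) :=
    ⟨1 / 2, 1 / 2, by norm_num, by norm_num, by norm_num, by module⟩
  simpa [ht.ne'] using hx.2 hminus hplus hseg

namespace Clutter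

variable {n : ℕ} {C : Clutter n}

variable (C) in
/-- The vector `A w` for an edge weighting `w`. -/
def edgeLoad {R : Type*} [Semiring R] (w : {e // e ∈ C.edges} → R) (i : Fin n) : R :=
  ∑ e, w e * if i ∈ e.1 then 1 else 0

variable (C) in
def IsHilbertBasis : Prop :=
  ∀ a : Fin n → ℤ,
    (∃ lam : {e // e ∈ C.edges} → ℝ, (∀ e, 0 ≤ lam e) ∧ ∀ i, (a i : ℝ) = C.edgeLoad lam i) →
      ∃ c : {e // e ∈ C.edges} → ℕ, ∀ i, a i = C.edgeLoad (fun e => (c e : ℤ)) i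

variable (C) in
noncomputable def minCoverWeight (α : Fin n → ℕ) : ℕ :=
  sInf {k | ∃ S, C.IsCover S ∧ ∑ i ∈ S, α i = k}

variable (C) in
def SupportInMinCovers (β : Fin n → ℕ) : Prop :=
  ∀ i, 0 < β i → ∃ S, C.IsCover S ∧ i ∈ S ∧ ∑ j ∈ S, β j = C.minCoverWeight β

section edgeLoad

variable {R : Type*} [CommSemiring R]

@[simp, norm_cast]
lemma natCast_edgeLoad (w : {e // e ∈ C.edges} → ℕ) (i : Fin n) :
    ((C.edgeLoad w i : ℕ) : R) = C.edgeLoad (fun e => (w e : R)) i := by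
  simp [edgeLoad]

@[simp, norm_cast]
lemma intCast_edgeLoad {R : Type*} [CommRing R] (w : {e // e ∈ C.edges} → ℤ) (i : Fin n) :
    ((C.edgeLoad w i : ℤ) : R) = C.edgeLoad (fun e => (w e : R)) i := by
  simp [edgeLoad]

lemma sum_mul_edgeLoad (x : Fin n → R) (w : {e // e ∈ C.edges} → R) :
    ∑ i, x i * C.edgeLoad w i = ∑ e, w e * ∑ i ∈ e.1, x i := by
  simp only [edgeLoad, mul_sum, mul_ite, mul_one, mul_zero]
  rw [sum_comm]
  refine sum_congr rfl fun e _ => ?_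
  rw [← sum_filter, filter_mem_eq_inter, univ_inter]
  exact sum_congr rfl fun i _ => mul_comm _ _

lemma edgeLoad_nonneg [PartialOrder R] [IsOrderedRing R] {w : {e // e ∈ C.edges} → R}
    (hw : 0 ≤ w) (i : Fin n) : 0 ≤ C.edgeLoad w i :=
  sum_nonneg fun e _ => mul_nonneg (hw e) (by split_ifs <;> simp)

lemma sum_le_sum_edgeLoad_of_isCover [PartialOrder R] [IsOrderedRing R] {S : Finset (Fin n)}
    (hS : C.IsCover S) {w : {e // e ∈ C.edges} → R} (hw : 0 ≤ w) :
    ∑ e, w e ≤ ∑ i ∈ S, C.edgeLoad w i := by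
  simp only [edgeLoad, mul_ite, mul_one, mul_zero]
  rw [sum_comm]
  refine sum_le_sum fun e _ => ?_
  obtain ⟨j, hj⟩ := hS e e.2
  rw [mem_inter] at hj
  calc w e = if j ∈ e.1 then w e else 0 := by rw [if_pos hj.1]
    _ ≤ _ := single_le_sum (f := fun i => if i ∈ e.1 then w e else 0)
        (fun i _ => by split_ifs; exacts [hw e, le_rfl]) hj.2

lemma Uniform.sum_edgeLoad {d : ℕ} (hC : C.Uniform d) (w : {e // e ∈ C.edges} → R) :
    ∑ i, C.edgeLoad w i = d * ∑ e, w e := by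
  rw [mul_sum]
  simpa [hC _ (Subtype.prop _), mul_comm] using sum_mul_edgeLoad (fun _ => (1 : R)) w

end edgeLoad

lemma sum_filter_mem_eq_edgeLoad (y : Finset (Fin n) → ℕ) (i : Fin n) :
    ∑ e ∈ C.edges.filter (i ∈ ·), y e = C.edgeLoad (fun e => y e.1) i := by
  simp [edgeLoad, sum_filter, ← sum_coe_sort C.edges]

lemma Uniform.sum_eq_of_edgeLoad_eq {d : ℕ} (hC : C.Uniform d) {w w' : {e // e ∈ C.edges} → ℝ}
    (h : C.edgeLoad w = C.edgeLoad w') : ∑ e, w e = ∑ e, w' e := by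
  rcases isEmpty_or_nonempty {e // e ∈ C.edges} with hE | ⟨⟨e, he⟩⟩
  · simp
  have hd : (d : ℝ) ≠ 0 := by
    rw [← hC e he]
    exact_mod_cast (C.nonempty_edges e he).card_pos.ne'
  exact mul_left_cancel₀ hd (by rw [← hC.sum_edgeLoad, ← hC.sum_edgeLoad, h])

lemma natCast_mem_QA_iff (x : Fin n → ℕ) :
    (fun i => (x i : ℝ)) ∈ C.QA ↔ ∀ e ∈ C.edges, 1 ≤ ∑ i ∈ e, x i := by
  simp only [QA, Set.mem_ofPred_eq, Nat.cast_nonneg, implies_true, true_and]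
  exact_mod_cast Iff.rfl

lemma one_mem_QA : (1 : Fin n → ℝ) ∈ C.QA :=
  ⟨fun _ => zero_le_one, fun e he => by simpa using (C.nonempty_edges e he).card_pos⟩

lemma inf_one_mem_QA {x : Fin n → ℝ} (hx : x ∈ C.QA) : x ⊓ 1 ∈ C.QA := by
  refine ⟨fun i => le_inf (hx.1 i) zero_le_one, fun e he => ?_⟩
  by_cases h : ∃ j ∈ e, 1 ≤ x j
  · obtain ⟨j, hj, hxj⟩ := h
    calc 1 = (x ⊓ 1) j := by simp [hxj]
      _ ≤ ∑ i ∈ e, (x ⊓ 1) i := single_le_sum (fun i _ => le_inf (hx.1 i) zero_le_one) hj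
  · push Not at h
    calc 1 ≤ ∑ i ∈ e, x i := hx.2 e he
      _ = _ := sum_congr rfl fun i hi => by simp [(h i hi).le]

lemma isClosed_QA : IsClosed C.QA := by
  have : C.QA = (⋂ i, {x | 0 ≤ x i}) ∩ ⋂ e ∈ C.edges, {x | 1 ≤ ∑ i ∈ e, x i} := by
    ext
    simp [QA]
  rw [this]
  exact (isClosed_iInter fun i => isClosed_le continuous_const (continuous_apply i)).inter
    (isClosed_biInter fun e _ => isClosed_le continuous_const (by fun_prop))

lemma sum_le_sum_mul_of_mem_QA {x : Fin n → ℝ} (hx : x ∈ C.QA) {w : {e // e ∈ C.edges} → ℝ}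
    (hw : 0 ≤ w) {α : Fin n → ℝ} (hα : ∀ i, C.edgeLoad w i ≤ α i) :
    ∑ e, w e ≤ ∑ i, α i * x i :=
  calc ∑ e, w e ≤ ∑ e, w e * ∑ i ∈ e.1, x i :=
        sum_le_sum fun e _ => le_mul_of_one_le_right (hw e) (hx.2 e e.2)
    _ = ∑ i, x i * C.edgeLoad w i := (sum_mul_edgeLoad x w).symm
    _ ≤ ∑ i, α i * x i :=
        sum_le_sum fun i _ => by rw [mul_comm]; exact mul_le_mul_of_nonneg_right (hα i) (hx.1 i)

lemma hasMFMC_iff : C.HasMFMC ↔ ∀ α : Fin n → ℕ, ∃ (x : Fin n → ℕ) (y : {e // e ∈ C.edges} → ℕ),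
    (fun i => (x i : ℝ)) ∈ C.QA ∧ (∀ i, C.edgeLoad y i ≤ α i) ∧ ∑ i, α i * x i = ∑ e, y e := by
  refine forall_congr' fun α => ⟨?_, ?_⟩
  · rintro ⟨x, y, hx, -, hy, hxy⟩
    refine ⟨x, fun e => y e.1, (natCast_mem_QA_iff x).2 hx, fun i => ?_, ?_⟩
    · rw [← sum_filter_mem_eq_edgeLoad]
      exact hy i
    · rw [hxy, ← sum_coe_sort]
  · rintro ⟨x, y, hx, hy, hxy⟩
    refine ⟨x, fun e => if h : e ∈ C.edges then y ⟨e, h⟩ else 0, (natCast_mem_QA_iff x).1 hx,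
      fun e he => dif_neg he, fun i => ?_, ?_⟩
    · rw [sum_filter_mem_eq_edgeLoad]
      simpa using hy i
    · rw [hxy, ← sum_coe_sort C.edges]
      exact sum_congr rfl fun e _ => by simp

lemma HasMFMC.exists_natCast_isMinOn (hM : C.HasMFMC) (α : Fin n → ℕ) :
    ∃ x : Fin n → ℕ, (fun i => (x i : ℝ)) ∈ C.QA ∧
      IsMinOn (fun w => ∑ i, (α i : ℝ) * w i) C.QA (fun i => (x i : ℝ)) := by
  obtain ⟨x, y, hx, hy, hxy⟩ := hasMFMC_iff.1 hM α
  refine ⟨x, hx, isMinOn_iff.2 fun w hw => ?_⟩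
  have hxy : ∑ i, (α i : ℝ) * x i = ∑ e, (y e : ℝ) := by exact_mod_cast hxy
  rw [hxy]
  exact sum_le_sum_mul_of_mem_QA hw (fun e => Nat.cast_nonneg _) fun i => by exact_mod_cast hy i

theorem isHilbertBasis_of_hasMFMC {d : ℕ} (hC : C.Uniform d) (hM : C.HasMFMC) :
    C.IsHilbertBasis := by
  rintro a ⟨lam, hlam, ha⟩
  have ha0 : ∀ i, 0 ≤ a i := fun i => by exact_mod_cast (ha i).symm ▸ edgeLoad_nonneg hlam i
  obtain ⟨x, y, hx, hy, hxy⟩ := hasMFMC_iff.1 hM fun i => (a i).toNat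
  have hα : ∀ i, (((a i).toNat : ℕ) : ℝ) = a i := fun i => by
    exact_mod_cast Int.toNat_of_nonneg (ha0 i)
  have hy : ∀ i, C.edgeLoad (fun e => (y e : ℝ)) i ≤ a i := fun i => by
    rw [← hα, ← natCast_edgeLoad]
    exact_mod_cast hy i
  have hlam_le : ∑ e, lam e ≤ ∑ e, (y e : ℝ) := by
    have hxy : ∑ i, (a i : ℝ) * x i = ∑ e, (y e : ℝ) := by
      simp only [← hα]
      exact_mod_cast hxy
    exact hxy ▸ sum_le_sum_mul_of_mem_QA hx hlam fun i => (ha i).ge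
  have hload : ∀ i, C.edgeLoad (fun e => (y e : ℝ)) i = a i := by
    refine fun i => (sum_eq_sum_iff_of_le fun i _ => hy i).1 (le_antisymm
      (sum_le_sum fun i _ => hy i) ?_) i (mem_univ i)
    calc ∑ i, (a i : ℝ) = d * ∑ e, lam e := by simp_rw [ha, hC.sum_edgeLoad]
      _ ≤ d * ∑ e, (y e : ℝ) := by gcongr
      _ = _ := (hC.sum_edgeLoad _).symm
  exact ⟨y, fun i => by exact_mod_cast (hload i).symm⟩

lemma eventually_add_smul_mem_QA {x v : Fin n → ℝ} (hx : x ∈ C.QA)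
    (hv₀ : ∀ i, x i = 0 → v i = 0)
    (hv₁ : ∀ e ∈ C.edges, ∑ i ∈ e, x i = 1 → ∑ i ∈ e, v i = 0) :
    ∀ᶠ t in 𝓝 (0 : ℝ), x + t • v ∈ C.QA := by
  have hlim : ∀ a b : ℝ, Tendsto (fun t : ℝ => a + t * b) (𝓝 0) (𝓝 a) := fun a b =>
    Continuous.tendsto' (by fun_prop) 0 a (by simp)
  simp only [QA, Set.mem_ofPred_eq, Pi.add_apply, Pi.smul_apply, smul_eq_mul, sum_add_distrib,
    ← mul_sum, eventually_and, eventually_all]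
  refine ⟨fun i => ?_, fun e he => ?_⟩
  · rcases (hx.1 i).eq_or_lt with h | h
    · exact Eventually.of_forall fun t => by simp [← h, hv₀ i h.symm]
    · exact ((hlim _ _).eventually_const_lt h).mono fun t ht => ht.le
  · rcases (hx.2 e he).eq_or_lt with h | h
    · exact Eventually.of_forall fun t => by simp [← h, hv₁ e he h.symm]
    · exact ((hlim _ _).eventually_const_lt h).mono fun t ht => ht.le

lemma eq_of_mem_extremePoints_QA {xs x : Fin n → ℝ} (hxs : xs ∈ C.QA.extremePoints ℝ)
    (h₀ : ∀ i, xs i = 0 → x i = 0)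
    (h₁ : ∀ e ∈ C.edges, ∑ i ∈ e, xs i = 1 → ∑ i ∈ e, x i = 1) : x = xs :=
  sub_eq_zero.1 <| eq_zero_of_mem_extremePoints_of_eventually hxs <|
    eventually_add_smul_mem_QA hxs.1 (fun i hi => by simp [hi, h₀ i hi])
      fun e he h => by simp [sum_sub_distrib, h, h₁ e he h]

theorem qaIntegral_of_hasMFMC (hM : C.HasMFMC) : C.QAIntegral := by
  intro xs hxs
  -- `α` counts the zero coordinates and the tight edges of `xs`. On `Q(A)`, each term of the
  -- expansion of `⟨α, w⟩` is at least its value at `w = xs`, so a minimizer is tight wherever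
  -- `xs` is.
  set tight : {e // e ∈ C.edges} → ℕ := fun e => if ∑ i ∈ e.1, xs i = 1 then 1 else 0
  set α : Fin n → ℕ := fun i => (if xs i = 0 then 1 else 0) + C.edgeLoad tight i
  have hobj : ∀ w : Fin n → ℝ, ∑ i, (α i : ℝ) * w i =
      ∑ i, (if xs i = 0 then w i else 0) + ∑ e, (tight e : ℝ) * ∑ i ∈ e.1, w i := by
    intro w
    simp only [α, Nat.cast_add, natCast_edgeLoad, add_mul, sum_add_distrib, ← sum_mul_edgeLoad]
    congr 1
    · simp
    · simp [mul_comm]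
  obtain ⟨x, hx, hmin⟩ := hM.exists_natCast_isMinOn α
  have hle := isMinOn_iff.1 hmin xs hxs.1
  simp only [hobj] at hle
  have h₀ : ∀ i ∈ univ, (if xs i = 0 then xs i else 0) ≤ (if xs i = 0 then (x i : ℝ) else 0) :=
    fun i _ => by split_ifs with h <;> simp [h]
  have h₁ : ∀ e ∈ univ, (tight e : ℝ) * ∑ i ∈ e.1, xs i ≤ (tight e : ℝ) * ∑ i ∈ e.1, (x i : ℝ) :=
    fun e _ => by
      simp only [tight]
      split_ifs with h
      · simpa [h] using hx.2 e e.2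
      · simp
  have e₀ := (sum_eq_sum_iff_of_le h₀).1 (by linarith [sum_le_sum h₀, sum_le_sum h₁])
  have e₁ := (sum_eq_sum_iff_of_le h₁).1 (by linarith [sum_le_sum h₀, sum_le_sum h₁])
  have hxxs := eq_of_mem_extremePoints_QA (x := fun i => (x i : ℝ)) hxs
    (fun i hi => by simpa [hi] using (e₀ i (mem_univ i)).symm)
    (fun e he h => by simpa [tight, h] using (e₁ ⟨e, he⟩ (mem_univ _)).symm)
  exact fun i => ⟨x i, by rw [← hxxs]; simp⟩

lemma exists_isMinOn_QA {β : Fin n → ℝ} (hβ : 0 ≤ β) :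
    ∃ z ∈ C.QA, IsMinOn (fun x => ∑ i, β i * x i) C.QA z := by
  obtain ⟨z, hz, hmin⟩ := (isCompact_Icc.inter_left isClosed_QA).exists_isMinOn
    ⟨1, one_mem_QA, zero_le_one, le_rfl⟩
    (by fun_prop : Continuous fun x => ∑ i, β i * x i).continuousOn
  refine ⟨z, hz.1, isMinOn_iff.2 fun x hx => ?_⟩
  calc _ ≤ ∑ i, β i * (x ⊓ 1) i := isMinOn_iff.1 hmin _
        ⟨inf_one_mem_QA hx, fun i => le_inf (hx.1 i) zero_le_one, inf_le_right⟩
    _ ≤ _ := sum_le_sum fun i _ => mul_le_mul_of_nonneg_left inf_le_left (hβ i)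

lemma exists_mem_extremePoints_isMinOn_QA {β : Fin n → ℝ} (hβ : ∀ i, 0 < β i) :
    ∃ z ∈ C.QA.extremePoints ℝ, IsMinOn (fun x => ∑ i, β i * x i) C.QA z := by
  -- The minimizers form an exposed face of `Q(A)`; as `β > 0` and truncation at `1` stays in
  -- `Q(A)`, this face lies in the unit cube, hence is compact and has an extreme point.
  let l : StrongDual ℝ (Fin n → ℝ) := -∑ i, β i • ContinuousLinearMap.proj i
  have hG : IsExposed ℝ C.QA (l.toExposed C.QA) := ContinuousLinearMap.toExposed.isExposed
  have hmem : ∀ z, z ∈ l.toExposed C.QA ↔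
      z ∈ C.QA ∧ IsMinOn (fun x => ∑ i, β i * x i) C.QA z :=
    fun z => by simp [l, ContinuousLinearMap.toExposed, isMinOn_iff]
  obtain ⟨z₀, hz₀, hmin₀⟩ := exists_isMinOn_QA (C := C) fun i => (hβ i).le
  have hbox : l.toExposed C.QA ⊆ Set.Icc 0 1 := by
    intro z hz
    obtain ⟨hzQ, hmin⟩ := (hmem z).1 hz
    refine ⟨hzQ.1, fun j => ?_⟩
    by_contra! hj
    have hlt : ∑ i, β i * (z ⊓ 1) i < ∑ i, β i * z i :=
      sum_lt_sum (fun i _ => mul_le_mul_of_nonneg_left inf_le_left (hβ i).le)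
        ⟨j, mem_univ j, mul_lt_mul_of_pos_left (by simpa using hj) (hβ j)⟩
    exact hlt.not_ge (isMinOn_iff.1 hmin _ (inf_one_mem_QA hzQ))
  obtain ⟨z, hz⟩ := (isCompact_Icc.of_isClosed_subset (hG.isClosed isClosed_QA) hbox)
    |>.extremePoints_nonempty ⟨z₀, (hmem z₀).2 ⟨hz₀, hmin₀⟩⟩
  exact ⟨z, hG.isExtreme.extremePoints_subset_extremePoints hz, ((hmem z).1 hz.1).2⟩

lemma QAIntegral.exists_natCast_isMinOn (hI : C.QAIntegral) {β : Fin n → ℝ}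
    (hβ : ∀ i, 0 < β i) :
    ∃ z : Fin n → ℕ, (fun i => (z i : ℝ)) ∈ C.QA ∧
      IsMinOn (fun x => ∑ i, β i * x i) C.QA (fun i => (z i : ℝ)) := by
  obtain ⟨z, hz, hmin⟩ := exists_mem_extremePoints_isMinOn_QA (C := C) hβ
  choose k hk using hI z hz
  have hz' : (fun i => ((k i).toNat : ℝ)) = z := funext fun i => by
    have : 0 ≤ k i := by exact_mod_cast hk i ▸ hz.1.1 i
    rw [hk i]
    exact_mod_cast Int.toNat_of_nonneg this
  exact ⟨fun i => (k i).toNat, hz' ▸ hz.1, hz' ▸ hmin⟩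

lemma isCover_univ : C.IsCover univ := fun e he => by simpa using C.nonempty_edges e he

lemma exists_isCover_sum_eq_minCoverWeight (α : Fin n → ℕ) :
    ∃ S, C.IsCover S ∧ ∑ i ∈ S, α i = C.minCoverWeight α := by
  have : {k | ∃ S, C.IsCover S ∧ ∑ i ∈ S, α i = k}.Nonempty := ⟨_, univ, isCover_univ, rfl⟩
  exact Nat.sInf_mem this

lemma minCoverWeight_le_sum {S : Finset (Fin n)} (hS : C.IsCover S) (α : Fin n → ℕ) :
    C.minCoverWeight α ≤ ∑ i ∈ S, α i :=
  Nat.sInf_le ⟨S, hS, rfl⟩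

lemma minCoverWeight_mono {α β : Fin n → ℕ} (h : α ≤ β) :
    C.minCoverWeight α ≤ C.minCoverWeight β := by
  obtain ⟨S, hS, hβS⟩ := exists_isCover_sum_eq_minCoverWeight (C := C) β
  exact (minCoverWeight_le_sum hS α).trans (hβS ▸ sum_le_sum fun i _ => h i)

lemma minCoverWeight_le_sum_mul {z : Fin n → ℕ} (hz : (fun i => (z i : ℝ)) ∈ C.QA)
    (α : Fin n → ℕ) : C.minCoverWeight α ≤ ∑ i, α i * z i := by
  have hS : C.IsCover (univ.filter (z · ≠ 0)) := fun e he => by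
    obtain ⟨i, hi, hzi⟩ := exists_ne_zero_of_sum_ne_zero
      (Nat.one_le_iff_ne_zero.1 ((natCast_mem_QA_iff z).1 hz e he))
    exact ⟨i, mem_inter.2 ⟨hi, mem_filter.2 ⟨mem_univ i, hzi⟩⟩⟩
  calc C.minCoverWeight α ≤ ∑ i ∈ univ.filter (z · ≠ 0), α i := minCoverWeight_le_sum hS α
    _ ≤ ∑ i ∈ univ.filter (z · ≠ 0), α i * z i :=
        sum_le_sum fun i hi => Nat.le_mul_of_pos_right _ (Nat.pos_of_ne_zero (mem_filter.1 hi).2)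
    _ ≤ ∑ i, α i * z i := sum_le_sum_of_subset (filter_subset _ _)

theorem QAIntegral.minCoverWeight_le (hI : C.QAIntegral) (α : Fin n → ℕ) {x : Fin n → ℝ}
    (hx : x ∈ C.QA) : (C.minCoverWeight α : ℝ) ≤ ∑ i, α i * x i := by
  refine le_of_forall_pos_le_add fun ε hε => ?_
  have hsx : 0 ≤ ∑ i, x i := sum_nonneg fun i _ => hx.1 i
  -- `α` may vanish somewhere; the perturbed weight `α + δ` is positive, so it has an integral
  -- minimizer, whose support is a cover.
  set δ := ε / (∑ i, x i + 1)
  have hδ : 0 < δ := by positivity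
  obtain ⟨z, hz, hmin⟩ := hI.exists_natCast_isMinOn (β := fun i => α i + δ) fun i => by positivity
  calc (C.minCoverWeight α : ℝ) ≤ ∑ i, (α i : ℝ) * z i := by
        exact_mod_cast minCoverWeight_le_sum_mul hz α
    _ ≤ ∑ i, (α i + δ) * z i := by gcongr; linarith
    _ ≤ ∑ i, (α i + δ) * x i := isMinOn_iff.1 hmin x hx
    _ = ∑ i, α i * x i + δ * ∑ i, x i := by simp [add_mul, sum_add_distrib, mul_sum]
    _ ≤ ∑ i, α i * x i + ε := by
        gcongr
        rw [div_mul_eq_mul_div, div_le_iff₀ (by positivity)]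
        nlinarith

variable (C) in
/-- A nonnegative combination `∑ λₑ (vₑ, 1) + ∑ sᵢ (eᵢ, 0)` of these vectors, the last coordinate
being `none`, equals `(α, ν)` exactly when `Aλ + s = α` and `∑ λₑ = ν`. -/
def packingGenerator : {e // e ∈ C.edges} ⊕ Fin n → Option (Fin n) → ℝ :=
  Sum.elim (fun e o => o.elim 1 fun i => if i ∈ e.1 then 1 else 0) fun i => Pi.single (some i) 1

lemma sum_smul_packingGenerator_none (c : {e // e ∈ C.edges} ⊕ Fin n → ℝ) :
    (∑ k, c k • C.packingGenerator k) none = ∑ e, c (.inl e) := by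
  simp [packingGenerator, Fintype.sum_sum_type]

lemma sum_smul_packingGenerator_some (c : {e // e ∈ C.edges} ⊕ Fin n → ℝ) (i : Fin n) :
    (∑ k, c k • C.packingGenerator k) (some i) =
      C.edgeLoad (fun e => c (.inl e)) i + c (.inr i) := by
  simp [packingGenerator, Fintype.sum_sum_type, edgeLoad, Pi.single_apply]

lemma eq_zero_of_sum_smul_packingGenerator_eq_zero {c : {e // e ∈ C.edges} ⊕ Fin n → ℝ}
    (hc : 0 ≤ c) (h : ∑ k, c k • C.packingGenerator k = 0) : c = 0 := by
  have hl : ∀ e, c (.inl e) = 0 := by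
    have := sum_smul_packingGenerator_none c
    rw [h, Pi.zero_apply, eq_comm, sum_eq_zero_iff_of_nonneg fun e _ => hc (.inl e)] at this
    exact fun e => this e (mem_univ e)
  have hr : ∀ i, c (.inr i) = 0 := fun i => by
    have := sum_smul_packingGenerator_some c i
    rw [h] at this
    simpa [hl, edgeLoad] using this.symm
  funext k
  cases k with
  | inl e => exact hl e
  | inr i => exact hr i

lemma mul_add_sum_mul_nonneg_of_forall_le {α : Fin n → ℝ} (hα : 0 ≤ α) {ν : ℝ} (hν : 0 ≤ ν)
    (h : ∀ x ∈ C.QA, ν ≤ ∑ i, α i * x i) {t : ℝ} {x : Fin n → ℝ} (hx : 0 ≤ x)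
    (htx : ∀ e ∈ C.edges, 0 ≤ t + ∑ i ∈ e, x i) : 0 ≤ t * ν + ∑ i, α i * x i := by
  have hαx : 0 ≤ ∑ i, α i * x i := sum_nonneg fun i _ => mul_nonneg (hα i) (hx i)
  rcases le_or_gt 0 t with ht | ht
  · positivity
  have hmem : (-t)⁻¹ • x ∈ C.QA := by
    refine ⟨fun i => smul_nonneg (inv_nonneg.2 (neg_nonneg.2 ht.le)) (hx i), fun e he => ?_⟩
    simp only [Pi.smul_apply, smul_eq_mul, ← mul_sum]
    rw [inv_mul_eq_div, le_div_iff₀ (by linarith)]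
    linarith [htx e he]
  have := h _ hmem
  simp only [Pi.smul_apply, smul_eq_mul, mul_left_comm _ (-t)⁻¹, ← mul_sum] at this
  rw [inv_mul_eq_div, le_div_iff₀ (by linarith)] at this
  linarith

theorem exists_dual_of_forall_le {α : Fin n → ℝ} (hα : 0 ≤ α) {ν : ℝ} (hν : 0 ≤ ν)
    (h : ∀ x ∈ C.QA, ν ≤ ∑ i, α i * x i) :
    ∃ lam : {e // e ∈ C.edges} → ℝ, 0 ≤ lam ∧ (∀ i, C.edgeLoad lam i ≤ α i) ∧
      ∑ e, lam e = ν := by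
  have hfarkas : ∀ φ : StrongDual ℝ (Option (Fin n) → ℝ), (∀ k, 0 ≤ φ (C.packingGenerator k)) →
      0 ≤ φ fun o => o.elim ν α := by
    intro φ hφ
    have hφv : ∀ v, φ v =
        v none * φ (Pi.single none 1) + ∑ i, v (some i) * φ (Pi.single (some i) 1) := fun v => by
      conv_lhs => rw [pi_eq_sum_univ' v]
      simp [Fintype.sum_option]
    have key := mul_add_sum_mul_nonneg_of_forall_le hα hν h
      (x := fun i => φ (Pi.single (some i) 1)) (t := φ (Pi.single none 1))
      (fun i => by simpa [packingGenerator] using hφ (.inr i)) fun e he => by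
        have := hφ (.inl ⟨e, he⟩)
        rw [hφv] at this
        simpa [packingGenerator, ite_mul, sum_ite_mem] using this
    rw [hφv]
    simpa [mul_comm] using key
  obtain ⟨c, hc, hcp⟩ := exists_nonneg_sum_smul_eq_of_forall_dual C.packingGenerator
    (fun c hc => eq_zero_of_sum_smul_packingGenerator_eq_zero hc) hfarkas
  refine ⟨fun e => c (.inl e), fun e => hc _, fun i => ?_, ?_⟩
  · have := sum_smul_packingGenerator_some c i
    simp only [hcp, Option.elim] at this
    linarith [show 0 ≤ c (.inr i) from hc _]
  · have := sum_smul_packingGenerator_none c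
    rw [hcp] at this
    exact this.symm

lemma exists_le_supportInMinCovers (α : Fin n → ℕ) :
    ∃ β ≤ α, C.minCoverWeight β = C.minCoverWeight α ∧ C.SupportInMinCovers β := by
  -- Take `β` of least total weight; lowering `β i` by one must then lower the minimum cover
  -- weight, which puts `i` into a minimum cover.
  obtain ⟨β, ⟨hβα, hνβ⟩, hmin⟩ := (measure fun β : Fin n → ℕ => ∑ i, β i).wf.has_min
    {β | β ≤ α ∧ C.minCoverWeight β = C.minCoverWeight α} ⟨α, le_rfl, rfl⟩
  refine ⟨β, hβα, hνβ, fun i hi => ?_⟩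
  set β' := Function.update β i (β i - 1)
  have hβ' : β = β' + Pi.single i 1 := funext fun j => by
    by_cases h : j = i
    · subst h
      simp only [Pi.add_apply, Function.update_self, Pi.single_eq_same, β']
      omega
    · simp [β', h]
  have hsum : ∀ S : Finset (Fin n), ∑ j ∈ S, β j = ∑ j ∈ S, β' j + if i ∈ S then 1 else 0 := by
    intro S
    conv_lhs => rw [hβ']
    simp [sum_add_distrib, sum_pi_single']
  have hβ'β : β' ≤ β := by
    rw [hβ']
    exact le_add_of_nonneg_right bot_le
  have hlt : C.minCoverWeight β' < C.minCoverWeight β := by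
    refine (minCoverWeight_mono hβ'β).lt_of_ne fun h => hmin β' ⟨hβ'β.trans hβα, h.trans hνβ⟩ ?_
    show ∑ j, β' j < ∑ j, β j
    simp [hsum univ]
  obtain ⟨S, hS, hSβ'⟩ := exists_isCover_sum_eq_minCoverWeight (C := C) β'
  have hle := minCoverWeight_le_sum hS β
  have hiS : i ∈ S := by
    by_contra hiS
    rw [hsum S, if_neg hiS, hSβ'] at hle
    omega
  refine ⟨S, hS, hiS, le_antisymm ?_ hle⟩
  rw [hsum S, if_pos hiS, hSβ']
  omega

lemma SupportInMinCovers.edgeLoad_eq {β : Fin n → ℕ} (hβ : C.SupportInMinCovers β)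
    {lam : {e // e ∈ C.edges} → ℝ} (hlam : 0 ≤ lam) (hle : ∀ i, C.edgeLoad lam i ≤ β i)
    (hsum : ∑ e, lam e = C.minCoverWeight β) (i : Fin n) : C.edgeLoad lam i = β i := by
  rcases (Nat.zero_le (β i)).eq_or_lt with h | h
  · exact le_antisymm (hle i) (by rw [← h]; simpa using edgeLoad_nonneg hlam i)
  obtain ⟨S, hS, hiS, hSβ⟩ := hβ i h
  have hge : ∑ j ∈ S, (β j : ℝ) ≤ ∑ j ∈ S, C.edgeLoad lam j :=
    calc ∑ j ∈ S, (β j : ℝ) = C.minCoverWeight β := by exact_mod_cast hSβ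
      _ = ∑ e, lam e := hsum.symm
      _ ≤ _ := sum_le_sum_edgeLoad_of_isCover hS hlam
  exact (sum_eq_sum_iff_of_le fun j _ => hle j).1
    (le_antisymm (sum_le_sum fun j _ => hle j) hge) i hiS

theorem hasMFMC_of_qaIntegral_of_isHilbertBasis {d : ℕ} (hC : C.Uniform d) (hI : C.QAIntegral)
    (hH : C.IsHilbertBasis) : C.HasMFMC := by
  refine hasMFMC_iff.2 fun α => ?_
  obtain ⟨β, hβα, hνβ, hβ⟩ := exists_le_supportInMinCovers (C := C) α
  obtain ⟨S, hS, hSα⟩ := exists_isCover_sum_eq_minCoverWeight (C := C) α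
  obtain ⟨lam, hlam, hle, hsum⟩ := exists_dual_of_forall_le (fun i => Nat.cast_nonneg (β i))
    (Nat.cast_nonneg _) fun x hx => hI.minCoverWeight_le β hx
  have hload := hβ.edgeLoad_eq hlam hle hsum
  obtain ⟨c, hc⟩ := hH (fun i => β i) ⟨lam, hlam, fun i => by simpa using (hload i).symm⟩
  have hcβ : ∀ i, C.edgeLoad c i = β i := fun i => by
    rw [← Nat.cast_inj (R := ℤ), natCast_edgeLoad]
    exact (hc i).symm
  have hcsum : ∑ e, c e = C.minCoverWeight β := by
    have := hC.sum_eq_of_edgeLoad_eq (w := fun e => (c e : ℝ)) (w' := lam)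
      (funext fun i => by rw [← natCast_edgeLoad, hcβ, hload])
    exact_mod_cast this.trans hsum
  refine ⟨fun i => if i ∈ S then 1 else 0, c, (natCast_mem_QA_iff _).2 fun e he => ?_,
    fun i => (hcβ i).trans_le (hβα i), ?_⟩
  · simpa [sum_boole, filter_mem_eq_inter, Nat.one_le_iff_ne_zero] using (hS e he).ne_empty
  · simp only [mul_ite, mul_one, mul_zero, ← sum_filter, filter_mem_eq_inter, univ_inter]
    rw [hSα, ← hνβ, hcsum]

end Clutter

/-- A uniform clutter `C` has the max-flow min-cut property if and only
if `Q(A)` is an integral polyhedron and `{v_1,…,v_q}` is a Hilbert basis, i.e.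
`ℕ{v_1,…,v_q} = ℝ₊{v_1,…,v_q} ∩ ℤⁿ`. -/
theorem stmt8 {n d : ℕ} (C : Clutter n) (hC : C.Uniform d) :
    C.HasMFMC ↔
      (C.QAIntegral ∧
        ∀ a : Fin n → ℤ,
          (∃ lam : {e // e ∈ C.edges} → ℝ, (∀ e, 0 ≤ lam e) ∧
            ∀ i, (a i : ℝ) = ∑ e, lam e * (if i ∈ e.1 then 1 else 0)) →
          ∃ c : {e // e ∈ C.edges} → ℕ,
            ∀ i, a i = ∑ e, (c e : ℤ) * (if i ∈ e.1 then 1 else 0)) :=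
  ⟨fun hM => ⟨C.qaIntegral_of_hasMFMC hM, C.isHilbertBasis_of_hasMFMC hC hM⟩,
    fun ⟨hI, hH⟩ => C.hasMFMC_of_qaIntegral_of_isHilbertBasis hC hI hH⟩
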